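/- arXiv:2111.12288 — 3 statements merged into one kernel-verified Lean document; each statement's English description precedes it below -/
import Mathlib

section
/- Let A ⊂ ℝⁿ be a cone with vertex x₀ and p ∈ Sⁿ⁻¹, δ₀ > 0 be such that p·(x - x₀) ≤ -δ₀ |x - x₀| for all x ∈ A. Then for h > 0 and ξ ∈ ℂⁿ with Re ξ = τ p, τ > 0, one has | ∫_{A \ B_h(x₀)} e^{ξ·(x-x₀)} dx | ≤ σ(S^{n-1}) (δ₀ τ)^{-n} Γ(n, δ₀ τ h), where σ(S^{n-1}) is the surface measure of the unit sphere and Γ(·,·) is the upper incomplete Gamma function. -/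
open MeasureTheory Real
open scoped RealInnerProductSpace

/-- The upper incomplete Gamma function `Γ(s, x) = ∫_x^∞ t^(s-1) e^(-t) dt`. -/
noncomputable def upperIncompleteGamma (s x : ℝ) : ℝ :=
  ∫ t in Set.Ioi x, t ^ (s - 1) * Real.exp (-t)

/-- The surface measure of the unit sphere `S^(n-1)` in `ℝⁿ`,
equal to `n` times the volume of the unit ball. -/
noncomputable def sphereSurface (n : ℕ) : ℝ :=
  n * (MeasureTheory.volume (Metric.ball (0 : EuclideanSpace ℝ (Fin n)) 1)).toReal

/-!
On `A` the real part of `ξ · (x - x₀)` is `τ p · (x - x₀) ≤ -δ₀ τ |x - x₀|`, so the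
integrand is dominated by the radial function `e^{-δ₀ τ |x - x₀|}`. Enlarging `A \ B_h(x₀)`
to the complement of the ball and integrating in polar coordinates gives
`σ(S^{n-1}) ∫_h^∞ r^{n-1} e^{-δ₀ τ r} dr`, and the substitution `t = δ₀ τ r`
turns this into `(δ₀ τ)^{-n} Γ(n, δ₀ τ h)`.
-/

open Metric Set

theorem integral_Ioi_rpow_mul_exp_neg_mul {s c h : ℝ} (hc : 0 < c) (hh : 0 ≤ h) :
    ∫ r in Ioi h, r ^ (s - 1) * exp (-(c * r)) = c ^ (-s) * upperIncompleteGamma s (c * h) := by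
  have hscale : ∫ r in Ioi h, (c * r) ^ (s - 1) * exp (-(c * r))
      = c ^ (s - 1) * ∫ r in Ioi h, r ^ (s - 1) * exp (-(c * r)) := by
    rw [← integral_const_mul]
    refine setIntegral_congr_fun measurableSet_Ioi fun r hr => ?_
    rw [mul_rpow hc.le (hh.trans hr.out.le), mul_assoc]
  rw [upperIncompleteGamma, ← integral_comp_mul_left_Ioi' _ _ hc, smul_eq_mul, hscale,
    rpow_sub_one hc.ne', rpow_neg hc.le]
  field_simp

section Polar

variable {E F : Type*} [NormedAddCommGroup E] [NormedSpace ℝ E] [FiniteDimensional ℝ E]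
  [MeasurableSpace E] [BorelSpace E] [Nontrivial E] (μ : Measure E) [μ.IsAddHaarMeasure]
  [NormedAddCommGroup F] [NormedSpace ℝ F]

theorem integrable_exp_neg_mul_norm_sub {c : ℝ} (hc : 0 < c) (x₀ : E) :
    Integrable (fun x => exp (-(c * ‖x - x₀‖))) μ := by
  refine Integrable.comp_sub_right (f := fun x : E => exp (-(c * ‖x‖))) ?_ x₀
  rw [integrable_fun_norm_addHaar μ (f := fun r => exp (-(c * r)))]
  refine (integrableOn_rpow_mul_exp_neg_mul_rpow (s := (Module.finrank ℝ E - 1 : ℕ))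
    (neg_one_lt_zero.trans_le (Nat.cast_nonneg _)) one_pos hc).congr_fun (fun r _ => ?_)
    measurableSet_Ioi
  dsimp only
  rw [rpow_natCast, rpow_one, smul_eq_mul, neg_mul]

theorem setIntegral_compl_ball_fun_norm_sub (f : ℝ → F) (x₀ : E) {h : ℝ} (hh : 0 < h) :
    ∫ x in (ball x₀ h)ᶜ, f ‖x - x₀‖ ∂μ =
      Module.finrank ℝ E • μ.real (ball 0 1) •
        ∫ r in Ioi h, r ^ (Module.finrank ℝ E - 1) • f r := by
  have hind : (ball x₀ h)ᶜ.indicator (fun x => f ‖x - x₀‖) =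
      fun x => (Ici h).indicator f ‖x - x₀‖ := by
    ext x
    simp only [indicator, mem_compl_iff, mem_ball, dist_eq_norm, not_lt, mem_Ici]
  rw [← integral_indicator measurableSet_ball.compl, hind,
    integral_sub_right_eq_self (fun x => (Ici h).indicator f ‖x‖), integral_fun_norm_addHaar,
    ← indicator_smul (Ici h) (fun r : ℝ => r ^ (Module.finrank ℝ E - 1)) f,
    setIntegral_indicator measurableSet_Ici, inter_eq_self_of_subset_right (Ici_subset_Ioi.2 hh),
    integral_Ici_eq_integral_Ioi]

theorem setIntegral_compl_ball_exp_neg_mul_norm_sub (x₀ : E) {c h : ℝ} (hc : 0 < c)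
    (hh : 0 < h) :
    ∫ x in (ball x₀ h)ᶜ, exp (-(c * ‖x - x₀‖)) ∂μ =
      Module.finrank ℝ E * μ.real (ball 0 1) * c ^ (-(Module.finrank ℝ E : ℝ)) *
        upperIncompleteGamma (Module.finrank ℝ E) (c * h) := by
  have hpow (r : ℝ) :
      r ^ (Module.finrank ℝ E - 1) = r ^ ((Module.finrank ℝ E : ℝ) - 1) := by
    rw [← rpow_natCast, Nat.cast_sub Module.finrank_pos, Nat.cast_one]
  rw [setIntegral_compl_ball_fun_norm_sub μ (fun r => exp (-(c * r))) x₀ hh]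
  simp_rw [smul_eq_mul, nsmul_eq_mul, hpow]
  rw [integral_Ioi_rpow_mul_exp_neg_mul hc hh.le]
  ring

theorem norm_setIntegral_diff_ball_le {G : Type*} [NormedAddCommGroup G] [NormedSpace ℝ G]
    {S : Set E} (hS : MeasurableSet S) {f : E → G} (x₀ : E) {c h : ℝ} (hc : 0 < c)
    (hh : 0 < h) (hf : ∀ x ∈ S, ‖f x‖ ≤ exp (-(c * ‖x - x₀‖))) :
    ‖∫ x in S \ ball x₀ h, f x ∂μ‖ ≤
      Module.finrank ℝ E * μ.real (ball 0 1) * c ^ (-(Module.finrank ℝ E : ℝ)) *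
        upperIncompleteGamma (Module.finrank ℝ E) (c * h) := by
  have hint := integrable_exp_neg_mul_norm_sub μ hc x₀
  calc ‖∫ x in S \ ball x₀ h, f x ∂μ‖
      ≤ ∫ x in S \ ball x₀ h, exp (-(c * ‖x - x₀‖)) ∂μ :=
        norm_integral_le_of_norm_le hint.integrableOn <| by
          filter_upwards [ae_restrict_mem (hS.diff measurableSet_ball)] with x hx
          exact hf x hx.1
    _ ≤ ∫ x in (ball x₀ h)ᶜ, exp (-(c * ‖x - x₀‖)) ∂μ :=
        setIntegral_mono_set hint.integrableOn (.of_forall fun _ => (exp_pos _).le)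
          (sdiff_subset_compl _ _).eventuallyLE
    _ = _ := setIntegral_compl_ball_exp_neg_mul_norm_sub μ x₀ hc hh

end Polar

theorem re_sum_mul_ofReal_eq_inner {ι : Type*} [Fintype ι] {ξ : ι → ℂ}
    {p : EuclideanSpace ℝ ι} {τ : ℝ} (hξ : ∀ i, (ξ i).re = τ * p i)
    (v : EuclideanSpace ℝ ι) :
    (∑ i, ξ i * (v i : ℂ)).re = τ * ⟪p, v⟫ := by
  simp only [Complex.re_sum, Complex.re_mul_ofReal, hξ, PiLp.inner_apply, RCLike.inner_apply,
    conj_trivial, Finset.mul_sum]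
  exact Finset.sum_congr rfl fun i _ => by ring

theorem cone_upper_estimate_general (n : ℕ) (hn : n = 2 ∨ n = 3)
    (x₀ p : EuclideanSpace ℝ (Fin n)) (δ₀ : ℝ) (hδ₀ : 0 < δ₀)
    (A : Set (EuclideanSpace ℝ (Fin n))) (hAmeas : MeasurableSet A)
    (hhalf : ∀ x ∈ A, ⟪p, x - x₀⟫ ≤ -δ₀ * ‖x - x₀‖)
    (h τ : ℝ) (hh : 0 < h) (hτ : 0 < τ)
    (ξ : Fin n → ℂ) (hξ : ∀ i, (ξ i).re = τ * p i) :
    ‖∫ x in A \ Metric.ball x₀ h,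
        Complex.exp (∑ i, ξ i * ((x i - x₀ i : ℝ) : ℂ))‖ ≤
      sphereSurface n * (δ₀ * τ) ^ (-(n : ℝ)) * upperIncompleteGamma n (δ₀ * τ * h) := by
  have : Nontrivial (EuclideanSpace ℝ (Fin n)) := by
    rcases hn with rfl | rfl <;> infer_instance
  have hbound (x) (hx : x ∈ A) :
      ‖Complex.exp (∑ i, ξ i * ((x i - x₀ i : ℝ) : ℂ))‖ ≤
        exp (-(δ₀ * τ * ‖x - x₀‖)) := by
    rw [Complex.norm_exp, exp_le_exp]
    have hre := re_sum_mul_ofReal_eq_inner hξ (x - x₀)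
    simp only [PiLp.sub_apply] at hre
    have := mul_le_mul_of_nonneg_left (hhalf x hx) hτ.le
    linarith
  simpa [sphereSurface, finrank_euclideanSpace_fin, measureReal_def] using
    norm_setIntegral_diff_ball_le volume hAmeas x₀ (mul_pos hδ₀ hτ) hh hbound

theorem cone_upper_estimate (n : ℕ) (hn : n = 2 ∨ n = 3)
    (x₀ p : EuclideanSpace ℝ (Fin n)) (hp : ‖p‖ = 1) (δ₀ : ℝ) (hδ₀ : 0 < δ₀)
    (A : Set (EuclideanSpace ℝ (Fin n))) (hAmeas : MeasurableSet A)
    (hcone : ∀ x ∈ A, ∀ t : ℝ, 0 < t → x₀ + t • (x - x₀) ∈ A)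
    (hhalf : ∀ x ∈ A, ⟪p, x - x₀⟫ ≤ -δ₀ * ‖x - x₀‖)
    (h τ : ℝ) (hh : 0 < h) (hτ : 0 < τ)
    (ξ : Fin n → ℂ) (hξ : ∀ i, (ξ i).re = τ * p i) :
    ‖∫ x in A \ Metric.ball x₀ h,
        Complex.exp (∑ i, ξ i * ((x i - x₀ i : ℝ) : ℂ))‖ ≤
      sphereSurface n * (δ₀ * τ) ^ (-(n : ℝ)) * upperIncompleteGamma n (δ₀ * τ * h) :=
  cone_upper_estimate_general n hn x₀ p δ₀ hδ₀ A hAmeas hhalf h τ hh hτ ξ hξ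
end

section
/- Let A ⊂ ℝⁿ be a cone with vertex x₀ and p ∈ Sⁿ⁻¹, δ₀ > 0 be such that p·(x - x₀) ≤ -δ₀ |x - x₀| for all x ∈ A, and let S_h = A ∩ B_h(x₀). Then for ξ ∈ ℂⁿ with Re ξ = τ p, τ > 0, one has | ∫_{S_h} e^{ξ·(x-x₀)} dx | ≤ σ(S^{n-1}) (δ₀ τ)^{-n} γ(n, δ₀ τ h) ≤ σ(S^{n-1}) (n-1)! (δ₀ τ)^{-n}. -/
open MeasureTheory Real
open scoped RealInnerProductSpace

/-- The lower incomplete Gamma function `γ(s, x) = ∫_0^x t^(s-1) e^(-t) dt`. -/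
noncomputable def lowerIncompleteGamma (s x : ℝ) : ℝ :=
  ∫ t in Set.Ioc (0 : ℝ) x, t ^ (s - 1) * Real.exp (-t)

/-!
On `A` the hypothesis `Re ξ = τ p` and the cone condition bound the integrand in modulus by
`exp (-δ₀ τ |x - x₀|)`. Integrating this radial bound over the whole ball `B_h(x₀)` in polar
coordinates gives `σ(S^{n-1}) ∫_0^h r^{n-1} e^{-δ₀ τ r} dr`, and the substitution `t = δ₀ τ r`
turns the radial integral into `(δ₀ τ)^{-n} γ(n, δ₀ τ h)`. Finally `γ(n, x) ≤ Γ(n) = (n-1)!`.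
-/

open Set Metric

lemma integral_ball_fun_norm_sub {F : Type*} [NormedAddCommGroup F] [NormedSpace ℝ F]
    {n : ℕ} (hn : 0 < n) (x₀ : EuclideanSpace ℝ (Fin n)) (h : ℝ) (f : ℝ → F) :
    ∫ x in ball x₀ h, f ‖x - x₀‖ = sphereSurface n • ∫ r in Ioc 0 h, r ^ (n - 1) • f r := by
  have : Nontrivial (EuclideanSpace ℝ (Fin n)) :=
    Module.nontrivial_of_finrank_pos (R := ℝ) (by rwa [finrank_euclideanSpace_fin])
  have hball : ∀ x,
      (ball x₀ h).indicator (fun x => f ‖x - x₀‖) x = (Iio h).indicator f ‖x - x₀‖ :=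
    fun x => by by_cases hx : ‖x - x₀‖ < h <;> simp [dist_eq_norm, hx]
  have hIoo : ∀ r,
      r ^ (n - 1) • (Iio h).indicator f r = (Iio h).indicator (fun r => r ^ (n - 1) • f r) r :=
    fun r => by by_cases hr : r < h <;> simp [hr]
  rw [← integral_indicator measurableSet_ball, funext hball,
    integral_sub_right_eq_self (fun x => (Iio h).indicator f ‖x‖), integral_fun_norm_addHaar,
    finrank_euclideanSpace_fin, funext hIoo, setIntegral_indicator measurableSet_Iio,
    Ioi_inter_Iio, ← integral_Ioc_eq_integral_Ioo, sphereSurface, ← smul_assoc, nsmul_eq_mul,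
    measureReal_def]

lemma lowerIncompleteGamma_le_Gamma {s : ℝ} (hs : 0 < s) (x : ℝ) :
    lowerIncompleteGamma s x ≤ Gamma s := by
  rw [Gamma_eq_integral hs, lowerIncompleteGamma]
  simp_rw [mul_comm (exp _)]
  refine setIntegral_mono_set ?_ ?_ Ioc_subset_Ioi_self.eventuallyLE
  · simpa only [mul_comm (exp _)] using GammaIntegral_convergent hs
  · filter_upwards [ae_restrict_mem measurableSet_Ioi] with t (ht : 0 < t)
    positivity

lemma integral_Ioc_rpow_mul_exp_neg_mul {s c : ℝ} (hc : 0 < c) (h : ℝ) :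
    ∫ r in Ioc 0 h, r ^ (s - 1) * exp (-(c * r)) =
      c ^ (-s) * lowerIncompleteGamma s (c * h) := by
  rcases le_or_gt h 0 with hh | hh
  · simp [lowerIncompleteGamma, hh, mul_nonpos_of_nonneg_of_nonpos hc.le hh]
  have hscale : ∀ r ∈ Ioc 0 h,
      r ^ (s - 1) * exp (-(c * r)) = c ^ (1 - s) * ((c * r) ^ (s - 1) * exp (-(c * r))) := by
    intro r hr
    rw [mul_rpow hc.le hr.1.le, ← mul_assoc, ← mul_assoc, ← rpow_add hc, sub_add_sub_cancel',
      sub_self, rpow_zero, one_mul]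
  rw [setIntegral_congr_fun measurableSet_Ioc hscale, integral_const_mul,
    ← intervalIntegral.integral_of_le hh.le,
    intervalIntegral.integral_comp_mul_left (fun t => t ^ (s - 1) * exp (-t)) hc.ne', mul_zero,
    intervalIntegral.integral_of_le (by positivity), smul_eq_mul, ← mul_assoc,
    lowerIncompleteGamma, ← rpow_neg_one, ← rpow_add hc]
  ring_nf

lemma norm_setIntegral_le_setIntegral_of_subset {α E : Type*} [MeasurableSpace α] {μ : Measure α}
    [NormedAddCommGroup E] [NormedSpace ℝ E] {f : α → E} {g : α → ℝ} {s t : Set α}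
    (hs : MeasurableSet s) (hst : s ⊆ t) (hg : IntegrableOn g t μ) (hg0 : 0 ≤ᵐ[μ.restrict t] g)
    (hfg : ∀ x ∈ s, ‖f x‖ ≤ g x) : ‖∫ x in s, f x ∂μ‖ ≤ ∫ x in t, g x ∂μ :=
  (norm_integral_le_of_norm_le (hg.mono_set hst) (ae_restrict_of_forall_mem hs hfg)).trans
    (setIntegral_mono_set hg hg0 hst.eventuallyLE)

lemma re_sum_mul_sub_eq_inner {n : ℕ} {ξ : Fin n → ℂ} {τ : ℝ} {p : EuclideanSpace ℝ (Fin n)}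
    (hξ : ∀ i, (ξ i).re = τ * p i) (x x₀ : EuclideanSpace ℝ (Fin n)) :
    (∑ i, ξ i * ((x i - x₀ i : ℝ) : ℂ)).re = τ * ⟪p, x - x₀⟫ := by
  simp [Complex.re_sum, PiLp.inner_apply, Finset.mul_sum, Complex.mul_re, hξ, mul_assoc, mul_comm]

lemma sphereSurface_nonneg (n : ℕ) : 0 ≤ sphereSurface n := by
  unfold sphereSurface
  positivity

theorem cone_lower_gamma_estimate_general (n : ℕ) (hn : n = 2 ∨ n = 3)
    (x₀ p : EuclideanSpace ℝ (Fin n)) (δ₀ : ℝ) (hδ₀ : 0 < δ₀)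
    (A : Set (EuclideanSpace ℝ (Fin n))) (hAmeas : MeasurableSet A)
    (hhalf : ∀ x ∈ A, ⟪p, x - x₀⟫ ≤ -δ₀ * ‖x - x₀‖)
    (h τ : ℝ) (hτ : 0 < τ)
    (ξ : Fin n → ℂ) (hξ : ∀ i, (ξ i).re = τ * p i) :
    ‖∫ x in A ∩ Metric.ball x₀ h,
        Complex.exp (∑ i, ξ i * ((x i - x₀ i : ℝ) : ℂ))‖ ≤
      sphereSurface n * (δ₀ * τ) ^ (-(n : ℝ)) * lowerIncompleteGamma n (δ₀ * τ * h) ∧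
    sphereSurface n * (δ₀ * τ) ^ (-(n : ℝ)) * lowerIncompleteGamma n (δ₀ * τ * h) ≤
      sphereSurface n * (Nat.factorial (n - 1) : ℝ) * (δ₀ * τ) ^ (-(n : ℝ)) := by
  have hn0 : 0 < n := by omega
  have hc : 0 < δ₀ * τ := mul_pos hδ₀ hτ
  have hbound : ∀ x ∈ A ∩ ball x₀ h,
      ‖Complex.exp (∑ i, ξ i * ((x i - x₀ i : ℝ) : ℂ))‖ ≤ exp (-(δ₀ * τ * ‖x - x₀‖)) := by
    intro x hx
    rw [Complex.norm_exp, re_sum_mul_sub_eq_inner hξ]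
    gcongr
    nlinarith [hhalf x hx.1]
  have hcont : Continuous fun x => exp (-(δ₀ * τ * ‖x - x₀‖)) := by fun_prop
  have hint : IntegrableOn (fun x => exp (-(δ₀ * τ * ‖x - x₀‖))) (ball x₀ h) :=
    (hcont.continuousOn.integrableOn_compact (isCompact_closedBall x₀ h)).mono_set
      ball_subset_closedBall
  have hpow : ∀ r ∈ Ioc 0 h,
      r ^ (n - 1) • exp (-(δ₀ * τ * r)) = r ^ ((n : ℝ) - 1) * exp (-(δ₀ * τ * r)) := by
    intro r _
    rw [smul_eq_mul, ← Nat.cast_pred hn0, rpow_natCast]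
  refine ⟨?_, ?_⟩
  · calc _ ≤ ∫ x in ball x₀ h, exp (-(δ₀ * τ * ‖x - x₀‖)) :=
          norm_setIntegral_le_setIntegral_of_subset (hAmeas.inter measurableSet_ball)
            inter_subset_right hint (ae_of_all _ fun x => (exp_pos _).le) hbound
      _ = sphereSurface n * ∫ r in Ioc 0 h, r ^ ((n : ℝ) - 1) * exp (-(δ₀ * τ * r)) := by
          rw [integral_ball_fun_norm_sub hn0 x₀ h fun r => exp (-(δ₀ * τ * r)), smul_eq_mul,
            setIntegral_congr_fun measurableSet_Ioc hpow]
      _ = _ := by rw [integral_Ioc_rpow_mul_exp_neg_mul hc, ← mul_assoc]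
  · have hΓ : Gamma n = (n - 1).factorial := by
      rw [← Gamma_nat_eq_factorial, Nat.cast_pred hn0, sub_add_cancel]
    rw [mul_right_comm _ ((n - 1).factorial : ℝ), ← hΓ]
    have := sphereSurface_nonneg n
    gcongr
    exact lowerIncompleteGamma_le_Gamma (by positivity) _

theorem cone_lower_gamma_estimate (n : ℕ) (hn : n = 2 ∨ n = 3)
    (x₀ p : EuclideanSpace ℝ (Fin n)) (hp : ‖p‖ = 1) (δ₀ : ℝ) (hδ₀ : 0 < δ₀)
    (A : Set (EuclideanSpace ℝ (Fin n))) (hAmeas : MeasurableSet A)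
    (hcone : ∀ x ∈ A, ∀ t : ℝ, 0 < t → x₀ + t • (x - x₀) ∈ A)
    (hhalf : ∀ x ∈ A, ⟪p, x - x₀⟫ ≤ -δ₀ * ‖x - x₀‖)
    (h τ : ℝ) (hh : 0 < h) (hτ : 0 < τ)
    (ξ : Fin n → ℂ) (hξ : ∀ i, (ξ i).re = τ * p i) :
    ‖∫ x in A ∩ Metric.ball x₀ h,
        Complex.exp (∑ i, ξ i * ((x i - x₀ i : ℝ) : ℂ))‖ ≤
      sphereSurface n * (δ₀ * τ) ^ (-(n : ℝ)) * lowerIncompleteGamma n (δ₀ * τ * h) ∧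
    sphereSurface n * (δ₀ * τ) ^ (-(n : ℝ)) * lowerIncompleteGamma n (δ₀ * τ * h) ≤
      sphereSurface n * (Nat.factorial (n - 1) : ℝ) * (δ₀ * τ) ^ (-(n : ℝ)) :=
  cone_lower_gamma_estimate_general n hn x₀ p δ₀ hδ₀ A hAmeas hhalf h τ hτ ξ hξ
end

section
/- Let z = a + i b ∈ ℂⁿ be a nonzero complex vector (a, b ∈ ℝⁿ, n = 2 or 3) and fix p ∈ S^{n-1}. Then there exists a unit vector p⊥ orthogonal to p and a constant C₀ > 0 (depending on a, b, p, p⊥) such that for all t ≥ 1, |z · (p⊥ − i t p)| ≥ C₀, where · is the bilinear (non-conjugated) dot product on ℂⁿ. Consequently, with η = p⊥ − i√(1+κ_s²/τ²) p and τ ≥ κ_s, one has |z·η| ≥ C₀ for all such τ. -/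
open Real
open scoped RealInnerProductSpace

/-!
Write `z = a + i b`. Then `z · (p' - i t p) = w + t v` with `w = z · p'` and `v = -i (z · p)`.
If `z · p ≠ 0`, take `p' = ±q` for any unit `q ⊥ p`, the sign chosen so that `⟪w, v⟫_ℝ ≥ 0`;
then `|w + t v|² ≥ t² |v|² ≥ |v|²`. If `z · p = 0`, both `a` and `b` are orthogonal to `p`, and
normalising a nonzero one of them gives a `p'` for which the amplitude is a nonzero constant.
-/

open Complex Module

section

variable {E : Type*} [NormedAddCommGroup E] [InnerProductSpace ℝ E]

theorem norm_le_norm_add_smul_of_inner_nonneg {w v : E} (hwv : 0 ≤ ⟪w, v⟫) {t : ℝ}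
    (ht : 1 ≤ t) : ‖v‖ ≤ ‖w + t • v‖ := by
  refine le_of_sq_le_sq ?_ (norm_nonneg _)
  rw [norm_add_sq_real, norm_smul, real_inner_smul_right, Real.norm_of_nonneg (by linarith)]
  have hcross : 0 ≤ t * ⟪w, v⟫ := mul_nonneg (by linarith) hwv
  have hgrowth : ‖v‖ ^ 2 ≤ t ^ 2 * ‖v‖ ^ 2 := le_mul_of_one_le_left (sq_nonneg _) (by nlinarith)
  nlinarith [sq_nonneg ‖w‖]

theorem exists_norm_eq_one_inner_eq_zero [FiniteDimensional ℝ E] (hE : 1 < finrank ℝ E)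
    (p : E) : ∃ q : E, ‖q‖ = 1 ∧ ⟪q, p⟫ = 0 := by
  have hspan : finrank ℝ (ℝ ∙ p) ≤ 1 := by
    simpa using finrank_span_le_card (R := ℝ) ({p} : Set E)
  have hsum := (ℝ ∙ p).finrank_add_finrank_orthogonal
  obtain ⟨v, hv, hv0⟩ := Submodule.exists_mem_ne_zero_of_ne_bot (p := (ℝ ∙ p)ᗮ) fun h => by
    rw [h, finrank_bot] at hsum; omega
  refine ⟨‖v‖⁻¹ • v, by simp [norm_smul, hv0], ?_⟩
  rw [real_inner_smul_left, Submodule.inner_left_of_mem_orthogonal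
    (Submodule.mem_span_singleton_self p) hv, mul_zero]

/-- The bilinear (unconjugated) product `(a + i b) · x` of a complex vector with a real one. -/
def complexDot (a b x : E) : ℂ := ⟪a, x⟫ + ⟪b, x⟫ * I

theorem complexDot_neg (a b x : E) : complexDot a b (-x) = -complexDot a b x := by
  simp only [complexDot, inner_neg_right]; push_cast; ring

theorem complexDot_eq_zero_iff {a b x : E} :
    complexDot a b x = 0 ↔ ⟪a, x⟫ = 0 ∧ ⟪b, x⟫ = 0 := by
  simp [complexDot, Complex.ext_iff]

theorem exists_forall_le_norm_complexDot_sub [FiniteDimensional ℝ E] (hE : 1 < finrank ℝ E)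
    {a b : E} (hab : ¬(a = 0 ∧ b = 0)) (p : E) :
    ∃ p' : E, ‖p'‖ = 1 ∧ ⟪p', p⟫ = 0 ∧ ∃ C₀ : ℝ, 0 < C₀ ∧
      ∀ t : ℝ, 1 ≤ t → C₀ ≤ ‖complexDot a b p' - t * I * complexDot a b p‖ := by
  by_cases hp : complexDot a b p = 0
  · obtain ⟨c, hc, hc0⟩ : ∃ c, (c = a ∨ c = b) ∧ c ≠ 0 := by
      by_cases ha : a = 0
      · exact ⟨b, Or.inr rfl, fun hb => hab ⟨ha, hb⟩⟩
      · exact ⟨a, Or.inl rfl, ha⟩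
    rw [complexDot_eq_zero_iff] at hp
    have hcp : ⟪c, p⟫ = 0 := by rcases hc with rfl | rfl <;> tauto
    have hcc : ⟪c, ‖c‖⁻¹ • c⟫ ≠ 0 := by simp [real_inner_smul_right, hc0]
    refine ⟨‖c‖⁻¹ • c, by simp [norm_smul, hc0], ?_, ‖complexDot a b (‖c‖⁻¹ • c)‖, ?_, ?_⟩
    · rw [real_inner_smul_left, hcp, mul_zero]
    · rw [norm_pos_iff, Ne, complexDot_eq_zero_iff]
      rcases hc with rfl | rfl <;> tauto
    · intro t _
      simp [complexDot_eq_zero_iff.mpr hp]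
  · obtain ⟨q, hq, hqp⟩ := exists_norm_eq_one_inner_eq_zero hE p
    set v : ℂ := -(I * complexDot a b p) with hv
    -- replacing `q` by `-q` flips the sign of `⟪complexDot a b q, v⟫`
    obtain ⟨p', hp', hp'p, hwv⟩ :
        ∃ p' : E, ‖p'‖ = 1 ∧ ⟪p', p⟫ = 0 ∧ 0 ≤ ⟪complexDot a b p', v⟫ := by
      rcases le_total 0 ⟪complexDot a b q, v⟫ with h | h
      · exact ⟨q, hq, hqp, h⟩
      · refine ⟨-q, by rwa [norm_neg], by rw [inner_neg_left, hqp, neg_zero], ?_⟩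
        rw [complexDot_neg, inner_neg_left]; linarith
    refine ⟨p', hp', hp'p, ‖v‖, by simpa [v] using hp, fun t ht => ?_⟩
    calc ‖v‖ ≤ ‖complexDot a b p' + t • v‖ := norm_le_norm_add_smul_of_inner_nonneg hwv ht
      _ = _ := by rw [Complex.real_smul, hv]; ring_nf

end

theorem sum_mul_sub_mul_I_eq_complexDot {ι : Type*} [Fintype ι] (a b x y : EuclideanSpace ℝ ι)
    (t : ℝ) :
    ∑ j, ((a j : ℝ) + (b j : ℝ) * I) * (((x j : ℝ) : ℂ) - ((t * y j : ℝ) : ℂ) * I) =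
      complexDot a b x - t * I * complexDot a b y := by
  simp only [complexDot, PiLp.inner_apply, RCLike.inner_apply, conj_trivial]
  push_cast
  simp only [Finset.mul_sum, Finset.sum_mul, ← Finset.sum_sub_distrib, ← Finset.sum_add_distrib]
  refine Finset.sum_congr rfl fun j _ => ?_
  ring_nf

theorem cgo_amplitude_lower_bound_general (n : ℕ) (hn : n = 2 ∨ n = 3)
    (a b : EuclideanSpace ℝ (Fin n)) (hz : ¬(a = 0 ∧ b = 0))
    (p : EuclideanSpace ℝ (Fin n)) :
    ∃ p' : EuclideanSpace ℝ (Fin n), ‖p'‖ = 1 ∧ ⟪p', p⟫ = 0 ∧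
      ∃ C₀ : ℝ, 0 < C₀ ∧
        (∀ t : ℝ, 1 ≤ t →
          C₀ ≤ ‖(∑ j, ((a j : ℝ) + (b j : ℝ) * Complex.I) *
            (((p' j : ℝ) : ℂ) - ((t * p j : ℝ) : ℂ) * Complex.I))‖) ∧
        (∀ κs τ : ℝ, 0 < κs → κs ≤ τ →
          C₀ ≤ ‖(∑ j, ((a j : ℝ) + (b j : ℝ) * Complex.I) *
            (((p' j : ℝ) : ℂ) - ((Real.sqrt (1 + κs ^ 2 / τ ^ 2) * p j : ℝ) : ℂ) * Complex.I))‖) := by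
  have hdim : 1 < finrank ℝ (EuclideanSpace ℝ (Fin n)) := by
    rw [finrank_euclideanSpace_fin]; omega
  obtain ⟨p', hp', hp'p, C₀, hC₀, hbound⟩ := exists_forall_le_norm_complexDot_sub hdim hz p
  have hsum : ∀ t : ℝ, 1 ≤ t → C₀ ≤ ‖(∑ j, ((a j : ℝ) + (b j : ℝ) * Complex.I) *
      (((p' j : ℝ) : ℂ) - ((t * p j : ℝ) : ℂ) * Complex.I))‖ := fun t ht => by
    rw [sum_mul_sub_mul_I_eq_complexDot]
    exact hbound t ht
  refine ⟨p', hp', hp'p, C₀, hC₀, hsum, fun κs τ _ _ => hsum _ ?_⟩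
  exact Real.one_le_sqrt.mpr (le_add_of_nonneg_right (by positivity))

theorem cgo_amplitude_lower_bound (n : ℕ) (hn : n = 2 ∨ n = 3)
    (a b : EuclideanSpace ℝ (Fin n)) (hz : ¬(a = 0 ∧ b = 0))
    (p : EuclideanSpace ℝ (Fin n)) (hp : ‖p‖ = 1) :
    ∃ p' : EuclideanSpace ℝ (Fin n), ‖p'‖ = 1 ∧ ⟪p', p⟫ = 0 ∧
      ∃ C₀ : ℝ, 0 < C₀ ∧
        (∀ t : ℝ, 1 ≤ t →
          C₀ ≤ ‖(∑ j, ((a j : ℝ) + (b j : ℝ) * Complex.I) *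
            (((p' j : ℝ) : ℂ) - ((t * p j : ℝ) : ℂ) * Complex.I))‖) ∧
        (∀ κs τ : ℝ, 0 < κs → κs ≤ τ →
          C₀ ≤ ‖(∑ j, ((a j : ℝ) + (b j : ℝ) * Complex.I) *
            (((p' j : ℝ) : ℂ) - ((Real.sqrt (1 + κs ^ 2 / τ ^ 2) * p j : ℝ) : ℂ) * Complex.I))‖) :=
  cgo_amplitude_lower_bound_general n hn a b hz p
end
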